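/- With notation as below, for y = (p,r) ∈ H(Z) and any t ≥ 2L, the ball B((p,r+t), t/(2L)) in (H(Z),ρ) is contained in A_y^{t/2} × [r, r+2t], where A_y^{t/2} = {x ∈ S_r : ρ_r(y,x) < t/2}. -/

import Mathlib

open Metric

/-- The hyperbolic cone "metric" on `H(Z) = Z × [0,∞)`. -/
noncomputable def hypConeRho {Z : Type*} [MetricSpace Z] (D : ℝ) (p q : Z × ℝ) : ℝ :=
  2 * Real.log ((dist p.1 q.1 + max (Real.exp (-p.2)) (Real.exp (-q.2)) * D) /
    (Real.exp (-(p.2 + q.2) / 2) * D))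

/-- The set of lengths of admissible `L`-chains from `x` to `y` staying in
`H(Z) \ B_r = Z × [r,∞)`. -/
noncomputable def chainSums {Z : Type*} [MetricSpace Z] (D L r : ℝ) (x y : Z × ℝ) :
    Set ℝ :=
  {S | ∃ (n : ℕ) (c : ℕ → Z × ℝ), c 0 = x ∧ c n = y ∧ (∀ i ≤ n, r ≤ (c i).2) ∧
    (∀ i < n, hypConeRho D (c i) (c (i + 1)) ≤ L) ∧
    S = ∑ i ∈ Finset.range n, hypConeRho D (c i) (c (i + 1))}

/-- The chain metric `ρ_r` on `H(Z) \ B_r`. -/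
noncomputable def chainDist {Z : Type*} [MetricSpace Z] (D L r : ℝ) (x y : Z × ℝ) : ℝ :=
  sInf (chainSums D L r x y)

/-!
Since `|s - s'| ≤ ρ((p,s),(q,s'))`, a point `z` of the ball lies at height between
`r + t/2` and `r + 3t/2`. Reading the defining formula of `ρ` backwards then gives
`d(p, z₁) < e^{-r-t/2} D`, so `(p,r)` and `(z₁,r)` are at `ρ`-distance `≤ 2e^{-t/2} < 1 ≤ L`:
the one-step chain between them already shows `ρ_r((p,r),(z₁,r)) < 1 ≤ t/2`.
-/

open Real

section HypCone

variable {Z : Type*} [MetricSpace Z] {D : ℝ}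

lemma exp_half_hypConeRho (hD : 0 < D) (x y : Z × ℝ) :
    exp (hypConeRho D x y / 2) =
      (dist x.1 y.1 + max (exp (-x.2)) (exp (-y.2)) * D) / (exp (-(x.2 + y.2) / 2) * D) := by
  rw [hypConeRho, mul_div_cancel_left₀ _ two_ne_zero, exp_log]
  positivity

lemma abs_sub_snd_le_hypConeRho (hD : 0 < D) (x y : Z × ℝ) :
    |x.2 - y.2| ≤ hypConeRho D x y := by
  have hmax : |x.2 - y.2| / 2 + -(x.2 + y.2) / 2 = max (-x.2) (-y.2) := by
    rcases le_total x.2 y.2 with h | h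
    · rw [abs_of_nonpos (by linarith), max_eq_left (by linarith)]; ring
    · rw [abs_of_nonneg (by linarith), max_eq_right (by linarith)]; ring
  have key : exp (|x.2 - y.2| / 2) ≤ exp (hypConeRho D x y / 2) := by
    rw [exp_half_hypConeRho hD, le_div_iff₀ (by positivity)]
    calc exp (|x.2 - y.2| / 2) * (exp (-(x.2 + y.2) / 2) * D)
        = max (exp (-x.2)) (exp (-y.2)) * D := by
          rw [← mul_assoc, ← exp_add, hmax, exp_monotone.map_max]
      _ ≤ _ := le_add_of_nonneg_left dist_nonneg
  linarith [exp_le_exp.mp key]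

lemma hypConeRho_nonneg (hD : 0 < D) (x y : Z × ℝ) : 0 ≤ hypConeRho D x y :=
  (abs_nonneg _).trans (abs_sub_snd_le_hypConeRho hD x y)

lemma dist_fst_le_hypConeRho (hD : 0 < D) (x y : Z × ℝ) :
    dist x.1 y.1 ≤ exp (hypConeRho D x y / 2 - (x.2 + y.2) / 2) * D := by
  rw [sub_eq_add_neg, ← neg_div, exp_add, mul_assoc, exp_half_hypConeRho hD,
    div_mul_cancel₀ _ (by positivity)]
  exact le_add_of_nonneg_right (by positivity)

lemma hypConeRho_same_height_le (hD : 0 < D) (p q : Z) (r : ℝ) :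
    hypConeRho D (p, r) (q, r) ≤ 2 * (exp r * dist p q / D) := by
  have key : exp (hypConeRho D (p, r) (q, r) / 2) ≤ exp (exp r * dist p q / D) := by
    rw [exp_half_hypConeRho hD]
    calc _ = exp r * dist p q / D + 1 := by
          simp only [max_self]
          rw [show -(r + r) / 2 = -r by ring, exp_neg]
          field_simp
      _ ≤ _ := add_one_le_exp _
  linarith [exp_le_exp.mp key]

lemma chainDist_le_hypConeRho (hD : 0 < D) {L r : ℝ} {x y : Z × ℝ} (hx : r ≤ x.2)
    (hy : r ≤ y.2) (hxy : hypConeRho D x y ≤ L) : chainDist D L r x y ≤ hypConeRho D x y := by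
  refine csInf_le ⟨0, ?_⟩ ⟨1, fun i => if i = 0 then x else y, rfl, rfl, ?_, ?_, ?_⟩
  · rintro S ⟨n, c, -, -, -, -, rfl⟩
    exact Finset.sum_nonneg fun i _ => hypConeRho_nonneg hD _ _
  · intro i _
    dsimp only
    split_ifs <;> assumption
  · intro i hi
    obtain rfl : i = 0 := by omega
    simpa using hxy
  · simp

end HypCone

theorem hypCone_ball_in_shadow_general {Z : Type*} [MetricSpace Z]
    (hbdd : Bornology.IsBounded (Set.univ : Set Z)) (a b : Z) (hab : a ≠ b)
    (D : ℝ) (hD : D = Metric.diam (Set.univ : Set Z))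
    (μ : ℝ) (hμ : 0 ≤ μ)
    (L : ℝ) (hL : L = 1 + 2 * μ) :
    ∀ (p : Z) (r t : ℝ), 0 ≤ r → 2 * L ≤ t → ∀ z : Z × ℝ, 0 ≤ z.2 →
      hypConeRho D (p, r + t) z < t / (2 * L) →
        chainDist D L r (p, r) (z.1, r) < t / 2 ∧ r ≤ z.2 ∧ z.2 ≤ r + 2 * t := by
  intro p r t _ ht z _ hball
  have hD0 : 0 < D := hD ▸ diam_pos ⟨a, Set.mem_univ a, b, Set.mem_univ b, hab⟩ hbdd
  have hball' : hypConeRho D (p, r + t) z < t / 2 :=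
    hball.trans_le (div_le_div_of_nonneg_left (by linarith) two_pos (by linarith))
  obtain ⟨hz_lo, hz_hi⟩ := abs_lt.mp ((abs_sub_snd_le_hypConeRho hD0 _ _).trans_lt hball')
  have hdist : exp r * dist p z.1 / D < exp (-t / 2) := by
    rw [div_lt_iff₀ hD0]
    calc exp r * dist p z.1
        ≤ exp r * (exp (hypConeRho D (p, r + t) z / 2 - (r + t + z.2) / 2) * D) :=
          mul_le_mul_of_nonneg_left (dist_fst_le_hypConeRho hD0 (p, r + t) z) (exp_pos r).le
      _ < exp r * (exp (-r + -t / 2) * D) := by gcongr; linarith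
      _ = exp (-t / 2) * D := by rw [exp_add, exp_neg]; field_simp
  have htwo : 2 < exp (t / 2) := by linarith [add_one_lt_exp (x := t / 2) (by linarith)]
  have hstep : hypConeRho D (p, r) (z.1, r) < 1 := by
    calc _ ≤ 2 * (exp r * dist p z.1 / D) := hypConeRho_same_height_le hD0 p z.1 r
      _ < 2 * exp (-t / 2) := by gcongr
      _ < 1 := by
          rw [neg_div, exp_neg, ← div_eq_mul_inv, div_lt_one (exp_pos _)]
          exact htwo
  have hchain : chainDist D L r (p, r) (z.1, r) ≤ hypConeRho D (p, r) (z.1, r) :=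
    chainDist_le_hypConeRho hD0 le_rfl le_rfl (by linarith)
  exact ⟨hchain.trans_lt (by linarith), by linarith, by linarith⟩

/-- For `y = (p,r) ∈ H(Z)` and `t ≥ 2L`, the ball
`B((p,r+t), t/(2L))` in `(H(Z),ρ)` is contained in `A_y^{t/2} × [r, r+2t]`, where
`A_y^{t/2} = {x ∈ S_r : ρ_r(y,x) < t/2}`. -/
theorem hypCone_ball_in_shadow {Z : Type*} [MetricSpace Z]
    (hbdd : Bornology.IsBounded (Set.univ : Set Z)) (a b : Z) (hab : a ≠ b)
    (D : ℝ) (hD : D = Metric.diam (Set.univ : Set Z))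
    (hucc : ∀ ε > (0:ℝ), ∀ x y : Z, ∃ (n : ℕ) (c : ℕ → Z),
      c 0 = x ∧ c n = y ∧ ∀ i < n, dist (c i) (c (i + 1)) ≤ ε)
    (μ : ℝ) (hμ : 0 ≤ μ)
    (hrough : ∀ p q : Z × ℝ, 0 ≤ p.2 → 0 ≤ q.2 →
      ∃ γ : ℝ → Z × ℝ, γ 0 = p ∧ γ (hypConeRho D p q) = q ∧
        (∀ u ∈ Set.Icc 0 (hypConeRho D p q), 0 ≤ (γ u).2) ∧
        ∀ s ∈ Set.Icc 0 (hypConeRho D p q), ∀ t ∈ Set.Icc 0 (hypConeRho D p q),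
          abs (hypConeRho D (γ s) (γ t) - |s - t|) ≤ 2 * μ)
    (L : ℝ) (hL : L = 1 + 2 * μ)
    (κ : ℝ) (hκ1 : 1 < κ)
    (hκ : ∀ s : ℝ, 0 ≤ s → ∀ u ∈ Set.Icc (0:ℝ) (Real.exp L),
      1 + Real.exp (-s) * u ≤ (1 + u) ^ (κ ^ (-s))) :
    ∀ (p : Z) (r t : ℝ), 0 ≤ r → 2 * L ≤ t → ∀ z : Z × ℝ, 0 ≤ z.2 →
      hypConeRho D (p, r + t) z < t / (2 * L) →
        chainDist D L r (p, r) (z.1, r) < t / 2 ∧ r ≤ z.2 ∧ z.2 ≤ r + 2 * t :=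
  hypCone_ball_in_shadow_general hbdd a b hab D hD μ hμ L hL
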